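/- arXiv:2203.06325 — 7 statements merged into one kernel-verified Lean document; each statement's English description precedes it below -/
import Mathlib

section
/- Let R be a commutative ring and let a, b, c, d ∈ R. Let S be the 3×3 matrix over R, with rows and columns indexed by {0,1,2}, representing the symmetric-square action of the 2×2 matrix γ = [[a,b],[c,d]] on the basis u₂ = e₁², u₁ = e₁e₂, u₀ = e₂² (where γ sends e₁ ↦ a·e₁ + c·e₂ and e₂ ↦ b·e₁ + d·e₂); explicitly S₂₂ = a², S₁₂ = 2ac, S₀₂ = c², S₂₁ = ab, S₁₁ = ad + bc, S₀₁ = cd, S₂₀ = b², S₁₀ = 2bd, S₀₀ = d². For any 3×3 matrix A over R (indexed by {0,1,2}) define p₁(A) = 2·A₂₀ − A₁₁ + 2·A₀₂ ∈ R. Then p₁(S · A · Sᵀ) = (ad − bc)² · p₁(A). -/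
/-- The non-canonical projection `p₁` on `Sym²E ⊗ Sym²E`, expressed on coefficient
matrices indexed by `{0,1,2}` (index `i` corresponding to the basis vector
`uᵢ = e₁^i e₂^(2-i)`): `p₁(A) = 2·A₂₀ − A₁₁ + 2·A₀₂`. -/
def proj1 {R : Type*} [CommRing R] (M : Matrix (Fin 3) (Fin 3) R) : R :=
  2 * M 2 0 - M 1 1 + 2 * M 0 2

/-- Equivariance of the projection `p₁`: if `S` is the matrix of the symmetric-square
action of `γ = [[a,b],[c,d]]` on the basis `u₂ = e₁², u₁ = e₁e₂, u₀ = e₂²`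
(where `γ e₁ = a e₁ + c e₂`, `γ e₂ = b e₁ + d e₂`), then for any coefficient
matrix `A` one has `p₁(S · A · Sᵀ) = (ad − bc)² · p₁(A)`. -/
theorem proj1_equivariant {R : Type*} [CommRing R] (a b c d : R)
    (S : Matrix (Fin 3) (Fin 3) R)
    (hS : S = !![d ^ 2, c * d, c ^ 2;
                 2 * b * d, a * d + b * c, 2 * a * c;
                 b ^ 2, a * b, a ^ 2])
    (A : Matrix (Fin 3) (Fin 3) R) :
    proj1 (S * A * S.transpose) = (a * d - b * c) ^ 2 * proj1 A := by
  subst hS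
  simp only [proj1, Matrix.mul_apply, Fin.sum_univ_three, Matrix.transpose_apply,
    Matrix.cons_val_zero, Matrix.cons_val_one, Matrix.head_cons, Matrix.cons_val_two,
    Matrix.tail_cons, Matrix.head_fin_const, Matrix.of_apply]
  ring
end

section
/- Let p be an odd prime and let s ≥ 1 be an integer. Let c₁,…,c_s and b₁,…,b_s be positive integers and t₁,…,t_s ∈ {1,2}, satisfying: (Sum) c₁+⋯+c_s = (p−1)/2 and b₁+⋯+b_s = (p+1)/2; (Chain) for each 1 ≤ i ≤ s−1: c_{i+1}+b_i ≡ 0 (mod p) if t_i = t_{i+1}, c_{i+1}+b_i ≡ (p+3)/2 (mod p) if (t_i,t_{i+1}) = (1,2), and c_{i+1}+b_i ≡ (p−3)/2 (mod p) if (t_i,t_{i+1}) = (2,1). Then s ≤ 2; moreover, if s = 2 then t₁ ≠ t₂ and p ≥ 7. -/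
private lemma int_dvd_eq_zero {p d : ℤ} (hd : p ∣ d) (h1 : -p < d) (h2 : d < p) : d = 0 := by
  by_contra hne
  have hpos : 0 < |d| := abs_pos.2 hne
  have hle : p ≤ |d| := Int.le_of_dvd hpos ((dvd_abs _ _).2 hd)
  rcases abs_cases d with ⟨h, _⟩ | ⟨h, _⟩ <;> omega

private lemma modeq_eq_of_bounds {P v r : ℤ} (h : v ≡ r [ZMOD P])
    (hv0 : 0 ≤ v) (hvP : v < P) (hr0 : 0 ≤ r) (hrP : r < P) : v = r := by
  have hd := h.dvd
  have := int_dvd_eq_zero hd (by omega) (by omega)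
  omega

/-- Section 3.3 of the paper (case `r = 1`): for an odd prime `p`, low numbers
`c₁,…,c_s`, jumping numbers `b₁,…,b_s` (positive integers) and types
`t₁,…,t_s ∈ {1,2}` with `Σcᵢ = (p−1)/2`, `Σbᵢ = (p+1)/2` and the chain
congruences (3.15), the number of low points satisfies `s ≤ 2`; moreover if
`s = 2` then `t₁ ≠ t₂` and `p ≥ 7`. -/
theorem low_points_at_most_two (p : ℕ) (hp : p.Prime) (hodd : Odd p)
    (s : ℕ) (hs : 1 ≤ s)
    (c b : ℕ → ℤ) (t : ℕ → ℕ)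
    (hc : ∀ i, 1 ≤ i → i ≤ s → 0 < c i)
    (hb : ∀ i, 1 ≤ i → i ≤ s → 0 < b i)
    (ht : ∀ i, 1 ≤ i → i ≤ s → t i = 1 ∨ t i = 2)
    (hsumc : ∑ i ∈ Finset.Icc 1 s, c i = ((p : ℤ) - 1) / 2)
    (hsumb : ∑ i ∈ Finset.Icc 1 s, b i = ((p : ℤ) + 1) / 2)
    (hchain_eq : ∀ i, 1 ≤ i → i ≤ s - 1 → t i = t (i + 1) →
      c (i + 1) + b i ≡ 0 [ZMOD (p : ℤ)])
    (hchain12 : ∀ i, 1 ≤ i → i ≤ s - 1 → t i = 1 → t (i + 1) = 2 →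
      c (i + 1) + b i ≡ ((p : ℤ) + 3) / 2 [ZMOD (p : ℤ)])
    (hchain21 : ∀ i, 1 ≤ i → i ≤ s - 1 → t i = 2 → t (i + 1) = 1 →
      c (i + 1) + b i ≡ ((p : ℤ) - 3) / 2 [ZMOD (p : ℤ)]) :
    s ≤ 2 ∧ (s = 2 → t 1 ≠ t 2 ∧ 7 ≤ p) := by
  have hp2 := hp.two_le
  obtain ⟨k, hk⟩ := hodd
  have hP : (p : ℤ) = 2 * (k : ℤ) + 1 := by exact_mod_cast congrArg (Nat.cast : ℕ → ℤ) hk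
  have hk1 : 1 ≤ k := by omega
  have hsumc' : ∑ i ∈ Finset.Icc 1 s, c i = (k : ℤ) := by rw [hsumc]; omega
  have hsumb' : ∑ i ∈ Finset.Icc 1 s, b i = (k : ℤ) + 1 := by rw [hsumb]; omega
  have h12 : ((p : ℤ) + 3) / 2 = (k : ℤ) + 2 := by omega
  have h21 : ((p : ℤ) - 3) / 2 = (k : ℤ) - 1 := by omega
  -- each cᵢ ≥ 1 forces s ≤ k
  have hcard : (s : ℤ) ≤ (k : ℤ) := by
    have h1 : (Finset.Icc 1 s).card • (1 : ℤ) ≤ ∑ i ∈ Finset.Icc 1 s, c i :=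
      Finset.card_nsmul_le_sum _ _ _ (fun i hi => by
        have h := Finset.mem_Icc.mp hi; exact hc i h.1 h.2)
    rw [hsumc'] at h1
    simpa using h1
  -- s ≥ 3 is impossible
  have key3 : s ≤ 2 := by
    by_contra hcon
    push_neg at hcon
    have hk3 : 3 ≤ k := by omega
    -- bounds from the sums
    have hsub1 : ({1, 2, 3} : Finset ℕ) ⊆ Finset.Icc 1 s := by
      intro x hx
      simp only [Finset.mem_insert, Finset.mem_singleton] at hx
      simp only [Finset.mem_Icc]
      omega
    have hsub2 : ({1, 2, s} : Finset ℕ) ⊆ Finset.Icc 1 s := by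
      intro x hx
      simp only [Finset.mem_insert, Finset.mem_singleton] at hx
      simp only [Finset.mem_Icc]
      omega
    have hCsub : ∑ i ∈ ({1, 2, 3} : Finset ℕ), c i ≤ (k : ℤ) := by
      rw [← hsumc']
      exact Finset.sum_le_sum_of_subset_of_nonneg hsub1 (fun i hi _ => by
        have h := Finset.mem_Icc.mp hi; exact (hc i h.1 h.2).le)
    have hBsub : ∑ i ∈ ({1, 2, s} : Finset ℕ), b i ≤ (k : ℤ) + 1 := by
      rw [← hsumb']
      exact Finset.sum_le_sum_of_subset_of_nonneg hsub2 (fun i hi _ => by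
        have h := Finset.mem_Icc.mp hi; exact (hb i h.1 h.2).le)
    have hC : c 1 + c 2 + c 3 ≤ (k : ℤ) := by
      rw [Finset.sum_insert (by norm_num), Finset.sum_pair (by norm_num)] at hCsub
      linarith
    have hB : b 1 + b 2 + b s ≤ (k : ℤ) + 1 := by
      rw [Finset.sum_insert (by simp; omega), Finset.sum_pair (by omega)] at hBsub
      linarith
    have hc1 := hc 1 (by omega) (by omega)
    have hc2 := hc 2 (by omega) (by omega)
    have hc3 := hc 3 (by omega) (by omega)
    have hb1 := hb 1 (by omega) (by omega)
    have hb2 := hb 2 (by omega) (by omega)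
    have hbs := hb s (by omega) (by omega)
    -- v1 = c 2 + b 1, v2 = c 3 + b 2, v1 + v2 ≤ 2k - 1
    have hv12 : c 2 + b 1 + (c 3 + b 2) ≤ 2 * (k : ℤ) - 1 := by linarith
    have hv1lb : 2 ≤ c 2 + b 1 := by linarith
    have hv2lb : 2 ≤ c 3 + b 2 := by linarith
    have hv1ub : c 2 + b 1 ≤ 2 * (k : ℤ) - 3 := by linarith
    have hv2ub : c 3 + b 2 ≤ 2 * (k : ℤ) - 3 := by linarith
    have ht1 := ht 1 (by omega) (by omega)
    have ht2 := ht 2 (by omega) (by omega)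
    have ht3 := ht 3 (by omega) (by omega)
    -- t 1 ≠ t 2 and t 2 ≠ t 3
    have hne12 : t 1 ≠ t 2 := by
      intro heq
      have hm : c 2 + b 1 ≡ 0 [ZMOD (p : ℤ)] := hchain_eq 1 (by omega) (by omega) heq
      have := modeq_eq_of_bounds hm (by omega) (by omega) (by omega) (by omega)
      omega
    have hne23 : t 2 ≠ t 3 := by
      intro heq
      have hm : c 3 + b 2 ≡ 0 [ZMOD (p : ℤ)] := hchain_eq 2 (by omega) (by omega) heq
      have := modeq_eq_of_bounds hm (by omega) (by omega) (by omega) (by omega)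
      omega
    rcases ht1 with h1 | h1 <;> rcases ht2 with h2 | h2 <;> rcases ht3 with h3 | h3
    · exact hne12 (by omega)
    · exact hne12 (by omega)
    · -- (1,2,1)
      have hm1 : c 2 + b 1 ≡ ((p : ℤ) + 3) / 2 [ZMOD (p : ℤ)] :=
        hchain12 1 (by omega) (by omega) h1 h2
      have hm2 : c 3 + b 2 ≡ ((p : ℤ) - 3) / 2 [ZMOD (p : ℤ)] :=
        hchain21 2 (by omega) (by omega) h2 h3
      rw [h12] at hm1
      rw [h21] at hm2
      have e1 := modeq_eq_of_bounds hm1 (by omega) (by omega) (by omega) (by omega)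
      have e2 := modeq_eq_of_bounds hm2 (by omega) (by omega) (by omega) (by omega)
      omega
    · exact hne23 (by omega)
    · exact hne23 (by omega)
    · -- (2,1,2)
      have hm1 : c 2 + b 1 ≡ ((p : ℤ) - 3) / 2 [ZMOD (p : ℤ)] :=
        hchain21 1 (by omega) (by omega) h1 h2
      have hm2 : c 3 + b 2 ≡ ((p : ℤ) + 3) / 2 [ZMOD (p : ℤ)] :=
        hchain12 2 (by omega) (by omega) h2 h3
      rw [h21] at hm1
      rw [h12] at hm2
      have e1 := modeq_eq_of_bounds hm1 (by omega) (by omega) (by omega) (by omega)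
      have e2 := modeq_eq_of_bounds hm2 (by omega) (by omega) (by omega) (by omega)
      omega
    · exact hne12 (by omega)
    · exact hne12 (by omega)
  refine ⟨key3, ?_⟩
  intro hs2
  subst hs2
  have hk2 : 2 ≤ k := by omega
  have hIcc : (Finset.Icc 1 2 : Finset ℕ) = {1, 2} := rfl
  rw [hIcc, Finset.sum_pair (by norm_num)] at hsumc' hsumb'
  have hc1 := hc 1 (by omega) (by omega)
  have hc2 := hc 2 (by omega) (by omega)
  have hb1 := hb 1 (by omega) (by omega)
  have hb2 := hb 2 (by omega) (by omega)
  have hvlb : 2 ≤ c 2 + b 1 := by linarith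
  have hvub : c 2 + b 1 ≤ 2 * (k : ℤ) - 1 := by linarith
  have ht1 := ht 1 (by omega) (by omega)
  have ht2 := ht 2 (by omega) (by omega)
  have hne : t 1 ≠ t 2 := by
    intro heq
    have hm : c 2 + b 1 ≡ 0 [ZMOD (p : ℤ)] := hchain_eq 1 (by omega) (by omega) heq
    have := modeq_eq_of_bounds hm (by omega) (by omega) (by omega) (by omega)
    omega
  refine ⟨hne, ?_⟩
  rcases ht1 with h1 | h1 <;> rcases ht2 with h2 | h2
  · exact absurd (h1.trans h2.symm) hne
  · have hm : c 2 + b 1 ≡ ((p : ℤ) + 3) / 2 [ZMOD (p : ℤ)] :=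
      hchain12 1 (by omega) (by omega) h1 h2
    rw [h12] at hm
    have := modeq_eq_of_bounds hm (by omega) (by omega) (by omega) (by omega)
    omega
  · have hm : c 2 + b 1 ≡ ((p : ℤ) - 3) / 2 [ZMOD (p : ℤ)] :=
      hchain21 1 (by omega) (by omega) h1 h2
    rw [h21] at hm
    have := modeq_eq_of_bounds hm (by omega) (by omega) (by omega) (by omega)
    omega
  · exact absurd (h1.trans h2.symm) hne
end

section
/- Let p be an odd prime and consider a theta-cycle datum with s = 2 and types (t₁, t₂) = (1, 2): positive integers c₁, c₂, b₁, b₂ and an integer k₀ with 1 ≤ k₀ ≤ p, such that c₁+c₂ = (p−1)/2, b₁+b₂ = (p+1)/2, k₀+c₁ ≡ 0 (mod p), c₂+b₁ ≡ (p+3)/2 (mod p), and k₀ ≡ b₂+(p+3)/2 (mod p). Then p ≥ 7, (p+5)/2 ≤ k₀ ≤ p−1, and c₁ = p−k₀, c₂ = k₀−(p+1)/2, b₁ = p+2−k₀, b₂ = k₀−(p+3)/2. -/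
/-- The `s = 2`, `(j₁,j₂) = (1,2)` case of the theta-cycle computation
(Theorem 3.13 of the paper): a theta-cycle datum with two low points of types
`(t₁,t₂) = (1,2)` — positive integers `c₁, c₂, b₁, b₂` and `1 ≤ k₀ ≤ p` with
`c₁+c₂ = (p−1)/2`, `b₁+b₂ = (p+1)/2`, `k₀+c₁ ≡ 0 (mod p)`,
`c₂+b₁ ≡ (p+3)/2 (mod p)` and `k₀ ≡ b₂+(p+3)/2 (mod p)` — forces `p ≥ 7`,
`(p+5)/2 ≤ k₀ ≤ p−1` and `(c₁,c₂,b₁,b₂) = (p−k₀, k₀−(p+1)/2, p+2−k₀, k₀−(p+3)/2)`. -/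
theorem theta_cycle_s_eq_two_type12 (p : ℕ) (hp : p.Prime) (hodd : Odd p)
    (c1 c2 b1 b2 k0 : ℤ)
    (hc1pos : 0 < c1) (hc2pos : 0 < c2) (hb1pos : 0 < b1) (hb2pos : 0 < b2)
    (hk0lb : 1 ≤ k0) (hk0ub : k0 ≤ (p : ℤ))
    (hsumc : c1 + c2 = ((p : ℤ) - 1) / 2)
    (hsumb : b1 + b2 = ((p : ℤ) + 1) / 2)
    (hinit : k0 + c1 ≡ 0 [ZMOD (p : ℤ)])
    (hchain : c2 + b1 ≡ ((p : ℤ) + 3) / 2 [ZMOD (p : ℤ)])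
    (hclose : k0 ≡ b2 + ((p : ℤ) + 3) / 2 [ZMOD (p : ℤ)]) :
    7 ≤ p ∧ ((p : ℤ) + 5) / 2 ≤ k0 ∧ k0 ≤ (p : ℤ) - 1 ∧
      c1 = (p : ℤ) - k0 ∧ c2 = k0 - ((p : ℤ) + 1) / 2 ∧
      b1 = (p : ℤ) + 2 - k0 ∧ b2 = k0 - ((p : ℤ) + 3) / 2 := by
  obtain ⟨m, hm⟩ := hodd
  have hp2 : p ≠ 2 := by rintro rfl; omega
  have hp3 : 3 ≤ p := by have := hp.two_le; omega
  have hPpos : (0:ℤ) < (p:ℤ) := by exact_mod_cast hp.pos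
  have hM : (p:ℤ) = 2 * (m:ℤ) + 1 := by exact_mod_cast congrArg (Nat.cast : ℕ → ℤ) hm
  -- first congruence
  have h1 : (p:ℤ) ∣ (k0 + c1) := by
    simpa using hinit.symm.dvd
  obtain ⟨a, ha⟩ := h1
  have ha1 : a = 1 := by
    have h0 : 0 < (p:ℤ) * a := by rw [← ha]; linarith
    have hapos : 0 < a := by
      by_contra h
      push_neg at h
      have := mul_nonpos_of_nonneg_of_nonpos hPpos.le h
      linarith
    have h2 : (p:ℤ) * a < (p:ℤ) * 2 := by
      rw [← ha]; omega
    have := lt_of_mul_lt_mul_left h2 hPpos.le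
    omega
  subst ha1
  have heq1 : k0 + c1 = (p:ℤ) := by omega
  -- second congruence
  have h2 : (p:ℤ) ∣ ((p:ℤ) + 3) / 2 - (c2 + b1) := hchain.dvd
  obtain ⟨a2, ha2⟩ := h2
  have ha20 : a2 = 0 := by
    have hlo : -((p:ℤ)) < (p:ℤ) * a2 := by rw [← ha2]; omega
    have hhi : (p:ℤ) * a2 < (p:ℤ) := by rw [← ha2]; omega
    nlinarith
  subst ha20
  have heq2 : c2 + b1 = ((m:ℤ)) + 2 := by omega
  omega
end

section
/- Let p be an odd prime and consider a theta-cycle datum with s = 2 and types (t₁, t₂) = (2, 1): positive integers c₁, c₂, b₁, b₂ and an integer k₀ with 1 ≤ k₀ ≤ p, such that c₁+c₂ = (p−1)/2, b₁+b₂ = (p+1)/2, k₀+c₁ ≡ (p+3)/2 (mod p), c₂+b₁ ≡ (p−3)/2 (mod p), and k₀ ≡ b₂ (mod p). Then p ≥ 7, 3 ≤ k₀ ≤ (p−1)/2, and c₁ = (p+3)/2−k₀, c₂ = k₀−2, b₁ = (p+1)/2−k₀, b₂ = k₀. -/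
private lemma aux_eq_zero_of_dvd_of_lt (n a : ℤ) (hn : 0 < n) (h : n ∣ a)
    (h1 : -n < a) (h2 : a < n) : a = 0 := by
  rcases h with ⟨t, rfl⟩
  rcases lt_trichotomy t 0 with h | h | h
  · nlinarith
  · simp [h]
  · nlinarith

/-- The `s = 2`, `(j₁,j₂) = (2,1)` case of the theta-cycle computation
(Theorem 3.13 of the paper): a theta-cycle datum with two low points of types
`(t₁,t₂) = (2,1)` — positive integers `c₁, c₂, b₁, b₂` and `1 ≤ k₀ ≤ p` with
`c₁+c₂ = (p−1)/2`, `b₁+b₂ = (p+1)/2`, `k₀+c₁ ≡ (p+3)/2 (mod p)`,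
`c₂+b₁ ≡ (p−3)/2 (mod p)` and `k₀ ≡ b₂ (mod p)` — forces `p ≥ 7`,
`3 ≤ k₀ ≤ (p−1)/2` and `(c₁,c₂,b₁,b₂) = ((p+3)/2−k₀, k₀−2, (p+1)/2−k₀, k₀)`. -/
theorem theta_cycle_s_eq_two_type21 (p : ℕ) (hp : p.Prime) (hodd : Odd p)
    (c1 c2 b1 b2 k0 : ℤ)
    (hc1pos : 0 < c1) (hc2pos : 0 < c2) (hb1pos : 0 < b1) (hb2pos : 0 < b2)
    (hk0lb : 1 ≤ k0) (hk0ub : k0 ≤ (p : ℤ))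
    (hsumc : c1 + c2 = ((p : ℤ) - 1) / 2)
    (hsumb : b1 + b2 = ((p : ℤ) + 1) / 2)
    (hinit : k0 + c1 ≡ ((p : ℤ) + 3) / 2 [ZMOD (p : ℤ)])
    (hchain : c2 + b1 ≡ ((p : ℤ) - 3) / 2 [ZMOD (p : ℤ)])
    (hclose : k0 ≡ b2 [ZMOD (p : ℤ)]) :
    7 ≤ p ∧ 3 ≤ k0 ∧ k0 ≤ ((p : ℤ) - 1) / 2 ∧
      c1 = ((p : ℤ) + 3) / 2 - k0 ∧ c2 = k0 - 2 ∧
      b1 = ((p : ℤ) + 1) / 2 - k0 ∧ b2 = k0 := by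
  obtain ⟨m, hm⟩ := hodd
  have hm1 : 1 ≤ m := by have := hp.two_le; omega
  have hpz : (p : ℤ) = 2 * m + 1 := by exact_mod_cast congrArg (Nat.cast : ℕ → ℤ) hm
  have hppos : (0 : ℤ) < (p : ℤ) := by omega
  -- b2 = k0
  have h1 : b2 - k0 = 0 := by
    apply aux_eq_zero_of_dvd_of_lt (p : ℤ) _ hppos hclose.dvd
    · omega
    · -- need b2 ≤ m : from hsumb
      have hb2ub : b2 ≤ (m : ℤ) := by omega
      omega
  have hk0m : k0 ≤ (m : ℤ) := by omega
  -- k0 + c1 = (p+3)/2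
  have h2 : ((p : ℤ) + 3) / 2 - (k0 + c1) = 0 := by
    apply aux_eq_zero_of_dvd_of_lt (p : ℤ) _ hppos hinit.dvd
    · -- c1 ≤ m - 1 from hsumc
      have hc1ub : c1 ≤ (m : ℤ) - 1 := by omega
      omega
    · omega
  refine ⟨?_, ?_, ?_, ?_, ?_, ?_, ?_⟩ <;> omega
end

section
/- Let p be an odd prime and let (s; c₁,…,c_s; b₁,…,b_s; t₁,…,t_s; k₀) be any theta-cycle datum. Then exactly one of the following holds: (a) s = 1 and k₀ ∈ {2, (p+1)/2}; (b) s = 2, (t₁,t₂) = (1,2), p ≥ 7, (p+5)/2 ≤ k₀ ≤ p−1, and (c₁, c₂, b₁, b₂) = (p−k₀, k₀−(p+1)/2, p+2−k₀, k₀−(p+3)/2); (c) s = 2, (t₁,t₂) = (2,1), p ≥ 7, 3 ≤ k₀ ≤ (p−1)/2, and (c₁, c₂, b₁, b₂) = ((p+3)/2−k₀, k₀−2, (p+1)/2−k₀, k₀). -/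
/-- A theta-cycle datum for an odd prime `p` (Section 3.3 of the paper, case
`r = 1`): an integer `s ≥ 1`, positive integers `c₁,…,c_s` (low numbers) and
`b₁,…,b_s` (jumping numbers), types `t₁,…,t_s ∈ {1,2}`, and an integer `k₀`
with `1 ≤ k₀ ≤ p`, subject to the sum conditions `Σcᵢ = (p−1)/2`,
`Σbᵢ = (p+1)/2`, the initial congruence, the chain congruences (3.15), and the
closing congruence. -/
private lemma dvd_cases' {P d : ℤ} (hP : 0 < P) (h : P ∣ d) (h1 : -P < d) (h2 : d < 2*P) :
    d = 0 ∨ d = P := by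
  obtain ⟨k, rfl⟩ := h
  have h0 : 0 ≤ k := by nlinarith
  have h1' : k ≤ 1 := by nlinarith
  interval_cases k <;> simp

private lemma sum_split3' (f : ℕ → ℤ) {s : ℕ} (hs : 3 ≤ s) :
    ∑ i ∈ Finset.Icc 1 s, f i = f 1 + f 2 + f 3 + ∑ i ∈ Finset.Icc 4 s, f i := by
  have h : Finset.Icc 1 s = insert 1 (insert 2 (insert 3 (Finset.Icc 4 s))) := by
    ext a; simp [Finset.mem_Icc, Finset.mem_insert]; omega
  rw [h, Finset.sum_insert (by simp [Finset.mem_Icc]),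
    Finset.sum_insert (by simp [Finset.mem_Icc]),
    Finset.sum_insert (by simp [Finset.mem_Icc])]
  ring

private lemma sum_lb' (f : ℕ → ℤ) (a s : ℕ) (h : ∀ i, a ≤ i → i ≤ s → 1 ≤ f i) :
    ((s + 1 - a : ℕ) : ℤ) ≤ ∑ i ∈ Finset.Icc a s, f i := by
  have := Finset.card_nsmul_le_sum (Finset.Icc a s) f 1
    (fun x hx => h x (Finset.mem_Icc.mp hx).1 (Finset.mem_Icc.mp hx).2)
  simpa [Nat.card_Icc] using this

private lemma sum_two' (f : ℕ → ℤ) : ∑ i ∈ Finset.Icc 1 2, f i = f 1 + f 2 := by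
  rw [show Finset.Icc 1 2 = {1, 2} by rfl, Finset.sum_pair (by norm_num)]

structure ThetaCycleDatum (p : ℕ) where
  s : ℕ
  hs : 1 ≤ s
  c : ℕ → ℤ
  b : ℕ → ℤ
  t : ℕ → ℕ
  k0 : ℤ
  hc : ∀ i, 1 ≤ i → i ≤ s → 0 < c i
  hb : ∀ i, 1 ≤ i → i ≤ s → 0 < b i
  ht : ∀ i, 1 ≤ i → i ≤ s → t i = 1 ∨ t i = 2
  hk0lb : 1 ≤ k0
  hk0ub : k0 ≤ (p : ℤ)
  hsumc : ∑ i ∈ Finset.Icc 1 s, c i = ((p : ℤ) - 1) / 2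
  hsumb : ∑ i ∈ Finset.Icc 1 s, b i = ((p : ℤ) + 1) / 2
  hinit1 : t 1 = 1 → k0 + c 1 ≡ 0 [ZMOD (p : ℤ)]
  hinit2 : t 1 = 2 → k0 + c 1 ≡ ((p : ℤ) + 3) / 2 [ZMOD (p : ℤ)]
  hchain_eq : ∀ i, 1 ≤ i → i ≤ s - 1 → t i = t (i + 1) →
    c (i + 1) + b i ≡ 0 [ZMOD (p : ℤ)]
  hchain12 : ∀ i, 1 ≤ i → i ≤ s - 1 → t i = 1 → t (i + 1) = 2 →
    c (i + 1) + b i ≡ ((p : ℤ) + 3) / 2 [ZMOD (p : ℤ)]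
  hchain21 : ∀ i, 1 ≤ i → i ≤ s - 1 → t i = 2 → t (i + 1) = 1 →
    c (i + 1) + b i ≡ ((p : ℤ) - 3) / 2 [ZMOD (p : ℤ)]
  hclose1 : t s = 1 → k0 ≡ b s [ZMOD (p : ℤ)]
  hclose2 : t s = 2 → k0 ≡ b s + ((p : ℤ) + 3) / 2 [ZMOD (p : ℤ)]

/-- Case (a) of the trichotomy: `s = 1` and `k₀ ∈ {2, (p+1)/2}`. -/
def ThetaCycleDatum.CaseA {p : ℕ} (D : ThetaCycleDatum p) : Prop :=
  D.s = 1 ∧ (D.k0 = 2 ∨ D.k0 = ((p : ℤ) + 1) / 2)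

/-- Case (b) of the trichotomy: `s = 2`, `(t₁,t₂) = (1,2)`, `p ≥ 7`,
`(p+5)/2 ≤ k₀ ≤ p−1` and
`(c₁,c₂,b₁,b₂) = (p−k₀, k₀−(p+1)/2, p+2−k₀, k₀−(p+3)/2)`. -/
def ThetaCycleDatum.CaseB {p : ℕ} (D : ThetaCycleDatum p) : Prop :=
  D.s = 2 ∧ D.t 1 = 1 ∧ D.t 2 = 2 ∧ 7 ≤ p ∧
    ((p : ℤ) + 5) / 2 ≤ D.k0 ∧ D.k0 ≤ (p : ℤ) - 1 ∧
    D.c 1 = (p : ℤ) - D.k0 ∧ D.c 2 = D.k0 - ((p : ℤ) + 1) / 2 ∧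
    D.b 1 = (p : ℤ) + 2 - D.k0 ∧ D.b 2 = D.k0 - ((p : ℤ) + 3) / 2

/-- Case (c) of the trichotomy: `s = 2`, `(t₁,t₂) = (2,1)`, `p ≥ 7`,
`3 ≤ k₀ ≤ (p−1)/2` and
`(c₁,c₂,b₁,b₂) = ((p+3)/2−k₀, k₀−2, (p+1)/2−k₀, k₀)`. -/
def ThetaCycleDatum.CaseC {p : ℕ} (D : ThetaCycleDatum p) : Prop :=
  D.s = 2 ∧ D.t 1 = 2 ∧ D.t 2 = 1 ∧ 7 ≤ p ∧
    3 ≤ D.k0 ∧ D.k0 ≤ ((p : ℤ) - 1) / 2 ∧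
    D.c 1 = ((p : ℤ) + 3) / 2 - D.k0 ∧ D.c 2 = D.k0 - 2 ∧
    D.b 1 = ((p : ℤ) + 1) / 2 - D.k0 ∧ D.b 2 = D.k0

set_option maxHeartbeats 1000000 in
private lemma tc_case1 (p : ℕ)
    (hp2 : p % 2 = 1) (hp3 : 3 ≤ p) (hP0 : (0:ℤ) < (p:ℤ)) (D : ThetaCycleDatum p)
    (hs : D.s = 1) : D.CaseA ∨ D.CaseB ∨ D.CaseC := by
  have hk0lb := D.hk0lb
  have hk0ub := D.hk0ub
  have hss := D.hs
  have hc1 : D.c 1 = ((p:ℤ) - 1) / 2 := by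
    have h := D.hsumc; rw [hs] at h; simpa using h
  rcases D.ht 1 le_rfl (by omega) with ht1 | ht1
  · have hd := (D.hinit1 ht1).symm.dvd
    rcases dvd_cases' hP0 hd (by omega) (by omega) with h | h
    · exfalso; omega
    · exact Or.inl ⟨hs, Or.inr (by omega)⟩
  · have hd := (D.hinit2 ht1).symm.dvd
    rcases dvd_cases' hP0 hd (by omega) (by omega) with h | h
    · exact Or.inl ⟨hs, Or.inl (by omega)⟩
    · exfalso; omega

set_option maxHeartbeats 1000000 in
private lemma tc_case2 (p : ℕ)
    (hp2 : p % 2 = 1) (hp3 : 3 ≤ p) (hP0 : (0:ℤ) < (p:ℤ)) (D : ThetaCycleDatum p)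
    (hs : D.s = 2) : D.CaseA ∨ D.CaseB ∨ D.CaseC := by
  have hk0lb := D.hk0lb
  have hk0ub := D.hk0ub
  have hss := D.hs
  have hsc : D.c 1 + D.c 2 = ((p:ℤ) - 1) / 2 := by
    have h := D.hsumc; rw [hs, sum_two'] at h; exact h
  have hsb : D.b 1 + D.b 2 = ((p:ℤ) + 1) / 2 := by
    have h := D.hsumb; rw [hs, sum_two'] at h; exact h
  have hc1p := D.hc 1 (by omega) (by omega)
  have hc2p := D.hc 2 (by omega) (by omega)
  have hb1p := D.hb 1 (by omega) (by omega)
  have hb2p := D.hb 2 (by omega) (by omega)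
  have ecc2 : D.c (1 + 1) = D.c 2 := rfl
  rcases D.ht 1 (by omega) (by omega) with ht1 | ht1 <;>
    rcases D.ht 2 (by omega) (by omega) with ht2 | ht2
  · -- (1,1): impossible
    exfalso
    have hd := (D.hchain_eq 1 le_rfl (by omega) (by rw [ht1, ht2])).symm.dvd
    norm_num at hd
    rcases dvd_cases' hP0 hd (by omega) (by omega) with h | h <;> omega
  · -- (1,2): Case B
    have hd1 := (D.hchain12 1 le_rfl (by omega) ht1 ht2).symm.dvd
    norm_num at hd1
    have hd2 := (D.hinit1 ht1).symm.dvd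
    have hcl := D.hclose2 (by rw [hs]; exact ht2)
    rw [hs] at hcl
    have hd3 := hcl.dvd
    have e1 : D.c 2 + D.b 1 = ((p:ℤ) + 3) / 2 := by
      rcases dvd_cases' hP0 hd1 (by omega) (by omega) with h | h <;> omega
    have e2 : D.k0 + D.c 1 = (p:ℤ) := by
      rcases dvd_cases' hP0 hd2 (by omega) (by omega) with h | h <;> omega
    have e3 : D.b 2 = D.k0 - ((p:ℤ) + 3) / 2 := by
      rcases dvd_cases' hP0 hd3 (by omega) (by omega) with h | h <;> omega
    exact Or.inr (Or.inl ⟨hs, ht1, ht2, by omega, by omega, by omega, by omega,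
      by omega, by omega, by omega⟩)
  · -- (2,1): Case C
    have hd1 := (D.hchain21 1 le_rfl (by omega) ht1 ht2).symm.dvd
    norm_num at hd1
    have hd2 := (D.hinit2 ht1).symm.dvd
    have e1 : D.c 2 + D.b 1 = ((p:ℤ) - 3) / 2 := by
      rcases dvd_cases' hP0 hd1 (by omega) (by omega) with h | h <;> omega
    have e2 : D.k0 + D.c 1 = ((p:ℤ) + 3) / 2 := by
      rcases dvd_cases' hP0 hd2 (by omega) (by omega) with h | h <;> omega
    exact Or.inr (Or.inr ⟨hs, ht1, ht2, by omega, by omega, by omega, by omega,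
      by omega, by omega, by omega⟩)
  · -- (2,2): impossible
    exfalso
    have hd := (D.hchain_eq 1 le_rfl (by omega) (by rw [ht1, ht2])).symm.dvd
    norm_num at hd
    rcases dvd_cases' hP0 hd (by omega) (by omega) with h | h <;> omega

set_option maxHeartbeats 1000000 in
private lemma tc_case3 (p : ℕ)
    (hp2 : p % 2 = 1) (hp3 : 3 ≤ p) (hP0 : (0:ℤ) < (p:ℤ)) (D : ThetaCycleDatum p)
    (hs : 3 ≤ D.s) : D.CaseA ∨ D.CaseB ∨ D.CaseC := by
  have hk0lb := D.hk0lb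
  have hk0ub := D.hk0ub
  have hss := D.hs
  exfalso
  have h3c : D.c 1 + D.c 2 + D.c 3 + ∑ i ∈ Finset.Icc 4 D.s, D.c i = ((p:ℤ) - 1) / 2 := by
    rw [← sum_split3' D.c hs]; exact D.hsumc
  have h3b : D.b 1 + D.b 2 + D.b 3 + ∑ i ∈ Finset.Icc 4 D.s, D.b i = ((p:ℤ) + 1) / 2 := by
    rw [← sum_split3' D.b hs]; exact D.hsumb
  have hRc := sum_lb' D.c 4 D.s (fun i h1 h2 => by have := D.hc i (by omega) h2; omega)
  have hRb := sum_lb' D.b 4 D.s (fun i h1 h2 => by have := D.hb i (by omega) h2; omega)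
  have hc1p := D.hc 1 (by omega) (by omega)
  have hc2p := D.hc 2 (by omega) (by omega)
  have hc3p := D.hc 3 (by omega) (by omega)
  have hb1p := D.hb 1 (by omega) (by omega)
  have hb2p := D.hb 2 (by omega) (by omega)
  have hb3p := D.hb 3 (by omega) (by omega)
  have ecc2 : D.c (1 + 1) = D.c 2 := rfl
  have ecc3 : D.c (2 + 1) = D.c 3 := rfl
  rcases D.ht 1 (by omega) (by omega) with h1 | h1 <;>
    rcases D.ht 2 (by omega) (by omega) with h2 | h2 <;>
      rcases D.ht 3 (by omega) (by omega) with h3 | h3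
  · have hd := (D.hchain_eq 1 le_rfl (by omega) (by rw [h1, h2])).symm.dvd
    rcases dvd_cases' hP0 hd (by omega) (by omega) with h | h <;> omega
  · have hd := (D.hchain_eq 1 le_rfl (by omega) (by rw [h1, h2])).symm.dvd
    rcases dvd_cases' hP0 hd (by omega) (by omega) with h | h <;> omega
  · have hd := dvd_add (D.hchain12 1 le_rfl (by omega) h1 h2).symm.dvd
      (D.hchain21 2 (by omega) (by omega) h2 h3).symm.dvd
    norm_num at hd
    rcases dvd_cases' hP0 hd (by omega) (by omega) with h | h <;> omega
  · have hd := (D.hchain_eq 2 (by omega) (by omega) (by rw [h2, h3])).symm.dvd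
    rcases dvd_cases' hP0 hd (by omega) (by omega) with h | h <;> omega
  · have hd := (D.hchain_eq 2 (by omega) (by omega) (by rw [h2, h3])).symm.dvd
    rcases dvd_cases' hP0 hd (by omega) (by omega) with h | h <;> omega
  · have hd := dvd_add (D.hchain21 1 le_rfl (by omega) h1 h2).symm.dvd
      (D.hchain12 2 (by omega) (by omega) h2 h3).symm.dvd
    norm_num at hd
    rcases dvd_cases' hP0 hd (by omega) (by omega) with h | h <;> omega
  · have hd := (D.hchain_eq 1 le_rfl (by omega) (by rw [h1, h2])).symm.dvd
    rcases dvd_cases' hP0 hd (by omega) (by omega) with h | h <;> omega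
  · have hd := (D.hchain_eq 1 le_rfl (by omega) (by rw [h1, h2])).symm.dvd
    rcases dvd_cases' hP0 hd (by omega) (by omega) with h | h <;> omega

/-- Trichotomy for theta-cycle data (the combinatorial content of Theorem 3.13
of the paper): for any theta-cycle datum exactly one of the cases (a), (b), (c)
holds. -/
theorem theta_cycle_trichotomy (p : ℕ) (hp : p.Prime) (hodd : Odd p)
    (D : ThetaCycleDatum p) :
    (D.CaseA ∨ D.CaseB ∨ D.CaseC) ∧
      ¬(D.CaseA ∧ D.CaseB) ∧ ¬(D.CaseA ∧ D.CaseC) ∧ ¬(D.CaseB ∧ D.CaseC) := by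

  have hp2 : p % 2 = 1 := Nat.odd_iff.mp hodd
  have hp3 : 3 ≤ p := by have := hp.two_le; omega
  have hP0 : (0:ℤ) < (p:ℤ) := by exact_mod_cast hp.pos
  refine ⟨?_, fun h => by have := h.1.1; have := h.2.1; omega,
    fun h => by have := h.1.1; have := h.2.1; omega,
    fun h => by have := h.1.2.1; have := h.2.2.1; omega⟩
  have hss := D.hs
  rcases (by omega : D.s = 1 ∨ D.s = 2 ∨ 3 ≤ D.s) with hs | hs | hs
  · exact tc_case1 p hp2 hp3 hP0 D hs
  · exact tc_case2 p hp2 hp3 hP0 D hs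
  · exact tc_case3 p hp2 hp3 hP0 D hs
end

section
/- Let p be an odd prime and let (s; c₁,…,c_s; b₁,…,b_s; t₁,…,t_s; k₀) be any theta-cycle datum. Then k₀ ∉ {1, (p+3)/2, p}. -/
/-- If `n ∣ d` and `|d| < 2n`, then `d ∈ {-n, 0, n}`. -/
lemma thetaKey {n d : ℤ} (hn : 0 < n) (h : n ∣ d) (h1 : -(2*n) < d) (h2 : d < 2*n) :
    d = -n ∨ d = 0 ∨ d = n := by
  obtain ⟨k, rfl⟩ := h
  have hk2 : k < 2 := by nlinarith
  have hk1 : -2 < k := by nlinarith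
  interval_cases k
  · left; ring
  · right; left; ring
  · right; right; ring


/-- Corollary 3.14 of the paper (combinatorial content): for any theta-cycle
datum for an odd prime `p`, the integer `k₀ ∈ [1, p]` is never `1`, `(p+3)/2`,
or `p`. -/
theorem theta_cycle_k0_ne (p : ℕ) (hp : p.Prime) (hodd : Odd p)
    (D : ThetaCycleDatum p) :
    D.k0 ≠ 1 ∧ D.k0 ≠ ((p : ℤ) + 3) / 2 ∧ D.k0 ≠ (p : ℤ) := by
  obtain ⟨m, hm⟩ := hodd
  have hp3 : 3 ≤ p := by
    have := hp.two_le
    omega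
  set q : ℤ := (m : ℤ) with hqdef
  have hq : (p : ℤ) = 2 * q + 1 := by push_cast [hm]; ring
  have hq1 : 1 ≤ q := by omega
  have hppos : (0:ℤ) < (p:ℤ) := by omega
  -- bounds on c 1
  have hc1 : 0 < D.c 1 := D.hc 1 le_rfl D.hs
  have hmem1 : 1 ∈ Finset.Icc 1 D.s := by
    simp [Finset.mem_Icc, D.hs]
  have hc1ub : D.c 1 ≤ q := by
    have h := Finset.single_le_sum (f := D.c)
      (fun i hi => by
        rw [Finset.mem_Icc] at hi
        exact (D.hc i hi.1 hi.2).le) hmem1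
    rw [D.hsumc] at h
    omega
  rcases D.ht 1 le_rfl D.hs with ht1 | ht1
  · -- t 1 = 1 : k0 + c 1 ≡ 0 [ZMOD p]
    have hdvd := (D.hinit1 ht1).dvd
    -- p ∣ 0 - (k0 + c1) ; k0 ∈ [1, 2q+1], c1 ∈ [1, q]
    have hk := D.hk0lb
    have hk' := D.hk0ub
    have hkey := thetaKey hppos hdvd (by omega) (by omega)
    -- so k0 + c1 = p, i.e. k0 = 2q+1 - c1 ∈ [q+1, 2q]
    refine ⟨by omega, ?_, by omega⟩
    -- k0 = (p+3)/2 = q+2 case: forces c1 = q - 1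
    intro hk0
    have hk0' : D.k0 = q + 2 := by omega
    have hc1eq : D.c 1 = q - 1 := by omega
    have hq2 : 2 ≤ q := by omega
    -- the remaining c's sum to 1, so s ≤ 2
    have hsplit : Finset.Icc 1 D.s = insert 1 (Finset.Icc 2 D.s) := by
      ext x
      simp only [Finset.mem_Icc, Finset.mem_insert]
      have := D.hs
      omega
    have h1not : (1:ℕ) ∉ Finset.Icc 2 D.s := by simp
    have hsum2 : ∑ i ∈ Finset.Icc 2 D.s, D.c i = 1 := by
      have := D.hsumc
      rw [hsplit, Finset.sum_insert h1not] at this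
      omega
    have hcard : ((Finset.Icc 2 D.s).card : ℤ) ≤ 1 := by
      calc ((Finset.Icc 2 D.s).card : ℤ) = ∑ i ∈ Finset.Icc 2 D.s, (1:ℤ) := by
            simp
        _ ≤ ∑ i ∈ Finset.Icc 2 D.s, D.c i := by
            apply Finset.sum_le_sum
            intro i hi
            rw [Finset.mem_Icc] at hi
            exact D.hc i (by omega) hi.2
        _ = 1 := hsum2
    have hcard' : (Finset.Icc 2 D.s).card = D.s - 1 := by
      rw [Nat.card_Icc]
      omega
    have hs2 : D.s ≤ 2 := by
      rw [hcard'] at hcard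
      have := D.hs
      omega
    -- case s = 1 or s = 2
    have hs1 := D.hs
    rcases (by omega : D.s = 1 ∨ D.s = 2) with hs | hs
    · -- s = 1 : c 1 = q but c 1 = q - 1
      have : ∑ i ∈ Finset.Icc 1 D.s, D.c i = D.c 1 := by
        rw [hs]; simp
      rw [D.hsumc] at this
      omega
    · -- s = 2
      have hicc : Finset.Icc 1 2 = ({1, 2} : Finset ℕ) := by decide
      have hc2 : D.c 2 = 1 := by
        have := D.hsumc
        rw [hs, hicc, Finset.sum_insert (by decide), Finset.sum_singleton] at this
        omega
      have hb1 : 0 < D.b 1 := D.hb 1 le_rfl (by omega)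
      have hb2 : 0 < D.b 2 := D.hb 2 (by omega) (by omega)
      have hbsum : D.b 1 + D.b 2 = q + 1 := by
        have := D.hsumb
        rw [hs, hicc, Finset.sum_insert (by decide), Finset.sum_singleton] at this
        omega
      rcases D.ht 2 (by omega) (by omega) with ht2 | ht2
      · -- t1 = t2 = 1 : c 2 + b 1 ≡ 0
        have hch : (p:ℤ) ∣ 0 - (D.c 2 + D.b 1) :=
          (D.hchain_eq 1 le_rfl (by omega) (by rw [ht1, ht2])).dvd
        have := thetaKey hppos hch (by omega) (by omega)
        omega
      · -- (t1,t2) = (1,2) : c 2 + b 1 ≡ (p+3)/2 = q+2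
        have hch : (p:ℤ) ∣ ((p:ℤ) + 3) / 2 - (D.c 2 + D.b 1) :=
          (D.hchain12 1 le_rfl (by omega) ht1 ht2).dvd
        have := thetaKey hppos hch (by omega) (by omega)
        omega
  · -- t 1 = 2 : k0 + c 1 ≡ (p+3)/2 [ZMOD p]
    have hdvd := (D.hinit2 ht1).dvd
    have hk := D.hk0lb
    have hk' := D.hk0ub
    have hkey := thetaKey hppos hdvd (by omega) (by omega)
    -- (p+3)/2 - (k0 + c1) ∈ {-p, 0, p}; (p+3)/2 = q+2
    refine ⟨by omega, by omega, by omega⟩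
end

section
/- Let p be an odd prime and let k₀ be an integer with 1 ≤ k₀ ≤ p−1. Suppose there exists a theta-cycle datum (s; c₁,…,c_s; b₁,…,b_s; t₁,…,t_s; k₀+1), i.e. a theta-cycle datum whose last entry is k₀+1 (note 2 ≤ k₀+1 ≤ p). Then one of the following holds: (a) s = 1 and k₀ ∈ {1, (p−1)/2}; (b) s = 2, (t₁,t₂) = (1,2), p ≥ 7, and (p+3)/2 ≤ k₀ ≤ p−2; (c) s = 2, (t₁,t₂) = (2,1), p ≥ 7, and 2 ≤ k₀ ≤ (p−3)/2. -/
private lemma theta_tri {p d : ℤ} (hp : 0 < p) (h : p ∣ d) (hlo : -(2 * p) < d)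
    (hhi : d < 2 * p) : d = -p ∨ d = 0 ∨ d = p := by
  obtain ⟨m, rfl⟩ := h
  have h1 : -2 < m := by nlinarith
  have h2 : m < 2 := by nlinarith
  have hm : m = -1 ∨ m = 0 ∨ m = 1 := by omega
  rcases hm with rfl | rfl | rfl
  · left; ring
  · right; left; ring
  · right; right; ring

set_option maxHeartbeats 1000000 in
/-- The combinatorial content of Theorem 3.15 of the paper (semi-ordinary
case): if `1 ≤ k₀ ≤ p−1` and there is a theta-cycle datum whose distinguished
integer is `k₀ + 1`, then one of the following holds:
(a) `s = 1` and `k₀ ∈ {1, (p−1)/2}`;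
(b) `s = 2`, `(t₁,t₂) = (1,2)`, `p ≥ 7` and `(p+3)/2 ≤ k₀ ≤ p−2`;
(c) `s = 2`, `(t₁,t₂) = (2,1)`, `p ≥ 7` and `2 ≤ k₀ ≤ (p−3)/2`. -/
theorem theta_cycle_semi_ordinary (p : ℕ) (hp : p.Prime) (hodd : Odd p)
    (k0 : ℤ) (hk0lb : 1 ≤ k0) (hk0ub : k0 ≤ (p : ℤ) - 1)
    (D : ThetaCycleDatum p) (hD : D.k0 = k0 + 1) :
    (D.s = 1 ∧ (k0 = 1 ∨ k0 = ((p : ℤ) - 1) / 2))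
    ∨ (D.s = 2 ∧ D.t 1 = 1 ∧ D.t 2 = 2 ∧ 7 ≤ p ∧
        ((p : ℤ) + 3) / 2 ≤ k0 ∧ k0 ≤ (p : ℤ) - 2)
    ∨ (D.s = 2 ∧ D.t 1 = 2 ∧ D.t 2 = 1 ∧ 7 ≤ p ∧
        2 ≤ k0 ∧ k0 ≤ ((p : ℤ) - 3) / 2) := by
  obtain ⟨q, hq⟩ := hodd
  have hp2 : 2 ≤ p := hp.two_le
  have hP : (p : ℤ) = 2 * (q : ℤ) + 1 := by push_cast [hq]; ring
  have hq1 : 1 ≤ q := by omega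
  have hppos : (0 : ℤ) < (p : ℤ) := by omega
  have hklb := D.hk0lb
  have hkub := D.hk0ub
  have hs1 : D.s = 1 ∨ D.s = 2 ∨ 3 ≤ D.s := by have := D.hs; omega
  rcases hs1 with hseq | hseq | hge
  · -- s = 1
    have hsc := D.hsumc
    have hsb := D.hsumb
    rw [hseq] at hsc hsb
    simp only [Finset.Icc_self, Finset.sum_singleton] at hsc hsb
    have ht1 := D.ht 1 le_rfl (by omega)
    have hcl1 := D.hclose1
    have hcl2 := D.hclose2
    rw [hseq] at hcl1 hcl2
    rcases ht1 with ht1 | ht1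
    · have d1 := (D.hinit1 ht1).dvd
      have d2 := (hcl1 ht1).dvd
      have e1 := theta_tri hppos d1 (by omega) (by omega)
      have e2 := theta_tri hppos d2 (by omega) (by omega)
      exact Or.inl ⟨hseq, by omega⟩
    · have d1 := (D.hinit2 ht1).dvd
      have d2 := (hcl2 ht1).dvd
      have e1 := theta_tri hppos d1 (by omega) (by omega)
      have e2 := theta_tri hppos d2 (by omega) (by omega)
      exact Or.inl ⟨hseq, by omega⟩
  · -- s = 2
    have hsc := D.hsumc
    have hsb := D.hsumb
    rw [hseq] at hsc hsb
    rw [show Finset.Icc 1 2 = ({1, 2} : Finset ℕ) by decide] at hsc hsb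
    rw [Finset.sum_insert (by decide), Finset.sum_singleton] at hsc hsb
    have hc1 := D.hc 1 le_rfl (by omega)
    have hc2 := D.hc 2 (by omega) (by omega)
    have hb1 := D.hb 1 le_rfl (by omega)
    have hb2 := D.hb 2 (by omega) (by omega)
    have ht1 := D.ht 1 le_rfl (by omega)
    have ht2 := D.ht 2 (by omega) (by omega)
    have hcl1 := D.hclose1
    have hcl2 := D.hclose2
    rw [hseq] at hcl1 hcl2
    rcases ht1 with ht1 | ht1 <;> rcases ht2 with ht2 | ht2
    · -- (1,1): impossible
      have d := (D.hchain_eq 1 le_rfl (by omega) (ht1.trans ht2.symm)).dvd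
      simp only [show (1:ℕ)+1 = 2 from rfl, show (2:ℕ)+1 = 3 from rfl] at d
      have e := theta_tri hppos d (by omega) (by omega)
      exact absurd e (by omega)
    · -- (1,2)
      have d1 := (D.hinit1 ht1).dvd
      have d2 := (D.hchain12 1 le_rfl (by omega) ht1 ht2).dvd
      simp only [show (1:ℕ)+1 = 2 from rfl, show (2:ℕ)+1 = 3 from rfl] at d2
      have d3 := (hcl2 ht2).dvd
      have e1 := theta_tri hppos d1 (by omega) (by omega)
      have e2 := theta_tri hppos d2 (by omega) (by omega)
      have e3 := theta_tri hppos d3 (by omega) (by omega)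
      exact Or.inr (Or.inl ⟨hseq, ht1, ht2, by omega, by omega, by omega⟩)
    · -- (2,1)
      have d1 := (D.hinit2 ht1).dvd
      have d2 := (D.hchain21 1 le_rfl (by omega) ht1 ht2).dvd
      simp only [show (1:ℕ)+1 = 2 from rfl, show (2:ℕ)+1 = 3 from rfl] at d2
      have d3 := (hcl1 ht2).dvd
      have e1 := theta_tri hppos d1 (by omega) (by omega)
      have e2 := theta_tri hppos d2 (by omega) (by omega)
      have e3 := theta_tri hppos d3 (by omega) (by omega)
      exact Or.inr (Or.inr ⟨hseq, ht1, ht2, by omega, by omega, by omega⟩)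
    · -- (2,2): impossible
      have d := (D.hchain_eq 1 le_rfl (by omega) (ht1.trans ht2.symm)).dvd
      simp only [show (1:ℕ)+1 = 2 from rfl, show (2:ℕ)+1 = 3 from rfl] at d
      have e := theta_tri hppos d (by omega) (by omega)
      exact absurd e (by omega)
  · -- s ≥ 3 : impossible
    exfalso
    have hsub : ({1, 2, 3} : Finset ℕ) ⊆ Finset.Icc 1 D.s := by
      intro x hx
      simp only [Finset.mem_insert, Finset.mem_singleton] at hx
      rcases hx with rfl | rfl | rfl <;> simp [Finset.mem_Icc] <;> omega
    have htriple : ∀ f : ℕ → ℤ, ∑ i ∈ ({1, 2, 3} : Finset ℕ), f i = f 1 + f 2 + f 3 := by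
      intro f
      rw [Finset.sum_insert (by decide), Finset.sum_insert (by decide),
        Finset.sum_singleton]
      ring
    have hcsum : D.c 1 + D.c 2 + D.c 3 ≤ ((p : ℤ) - 1) / 2 := by
      rw [← htriple D.c, ← D.hsumc]
      exact Finset.sum_le_sum_of_subset_of_nonneg hsub
        (fun i hi _ => (D.hc i (Finset.mem_Icc.mp hi).1 (Finset.mem_Icc.mp hi).2).le)
    have hbsum : D.b 1 + D.b 2 + D.b 3 ≤ ((p : ℤ) + 1) / 2 := by
      rw [← htriple D.b, ← D.hsumb]
      exact Finset.sum_le_sum_of_subset_of_nonneg hsub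
        (fun i hi _ => (D.hb i (Finset.mem_Icc.mp hi).1 (Finset.mem_Icc.mp hi).2).le)
    have hc1 := D.hc 1 le_rfl (by omega)
    have hc2 := D.hc 2 (by omega) (by omega)
    have hc3 := D.hc 3 (by omega) (by omega)
    have hb1 := D.hb 1 le_rfl (by omega)
    have hb2 := D.hb 2 (by omega) (by omega)
    have hb3 := D.hb 3 (by omega) (by omega)
    have ht1 := D.ht 1 le_rfl (by omega)
    have ht2 := D.ht 2 (by omega) (by omega)
    have ht3 := D.ht 3 (by omega) (by omega)
    rcases ht1 with ht1 | ht1 <;> rcases ht2 with ht2 | ht2 <;>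
      rcases ht3 with ht3 | ht3
    · have d := (D.hchain_eq 1 le_rfl (by omega) (ht1.trans ht2.symm)).dvd
      simp only [show (1:ℕ)+1 = 2 from rfl, show (2:ℕ)+1 = 3 from rfl] at d
      have e := theta_tri hppos d (by omega) (by omega)
      omega
    · have d := (D.hchain_eq 1 le_rfl (by omega) (ht1.trans ht2.symm)).dvd
      simp only [show (1:ℕ)+1 = 2 from rfl, show (2:ℕ)+1 = 3 from rfl] at d
      have e := theta_tri hppos d (by omega) (by omega)
      omega
    · -- (1,2,1)
      have d1 := (D.hchain12 1 le_rfl (by omega) ht1 ht2).dvd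
      simp only [show (1:ℕ)+1 = 2 from rfl, show (2:ℕ)+1 = 3 from rfl] at d1
      have d2 := (D.hchain21 2 (by omega) (by omega) ht2 ht3).dvd
      simp only [show (1:ℕ)+1 = 2 from rfl, show (2:ℕ)+1 = 3 from rfl] at d2
      have e1 := theta_tri hppos d1 (by omega) (by omega)
      have e2 := theta_tri hppos d2 (by omega) (by omega)
      omega
    · have d := (D.hchain_eq 2 (by omega) (by omega) (ht2.trans ht3.symm)).dvd
      simp only [show (1:ℕ)+1 = 2 from rfl, show (2:ℕ)+1 = 3 from rfl] at d
      have e := theta_tri hppos d (by omega) (by omega)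
      omega
    · have d := (D.hchain_eq 2 (by omega) (by omega) (ht2.trans ht3.symm)).dvd
      simp only [show (1:ℕ)+1 = 2 from rfl, show (2:ℕ)+1 = 3 from rfl] at d
      have e := theta_tri hppos d (by omega) (by omega)
      omega
    · -- (2,1,2)
      have d1 := (D.hchain21 1 le_rfl (by omega) ht1 ht2).dvd
      simp only [show (1:ℕ)+1 = 2 from rfl, show (2:ℕ)+1 = 3 from rfl] at d1
      have d2 := (D.hchain12 2 (by omega) (by omega) ht2 ht3).dvd
      simp only [show (1:ℕ)+1 = 2 from rfl, show (2:ℕ)+1 = 3 from rfl] at d2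
      have e1 := theta_tri hppos d1 (by omega) (by omega)
      have e2 := theta_tri hppos d2 (by omega) (by omega)
      omega
    · have d := (D.hchain_eq 1 le_rfl (by omega) (ht1.trans ht2.symm)).dvd
      simp only [show (1:ℕ)+1 = 2 from rfl, show (2:ℕ)+1 = 3 from rfl] at d
      have e := theta_tri hppos d (by omega) (by omega)
      omega
    · have d := (D.hchain_eq 1 le_rfl (by omega) (ht1.trans ht2.symm)).dvd
      simp only [show (1:ℕ)+1 = 2 from rfl, show (2:ℕ)+1 = 3 from rfl] at d
      have e := theta_tri hppos d (by omega) (by omega)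
      omega
end
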